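/- arXiv:1610.08068 — 3 statements merged into one kernel-verified Lean document; each statement's English description precedes it below -/
import Mathlib

section
/- Let C be a category and M a class of morphisms in C. Then the class of retracts (in the arrow category of Ind(C)) of morphisms in Lw≅(M) equals Lw≅(M); i.e., Lw≅(M) is closed under retracts. -/
open CategoryTheory Limits

universe v u

namespace Paper

variable {C : Type v} [SmallCategory C]

/-- The ind-object associated to a small filtered diagram `X : I ⥤ C`, namely the colimit in
`Ind C` of the composition of `X` with the Yoneda embedding `C ⥤ Ind C`. -/
noncomputable def indOf {I : Type v} [SmallCategory I] [IsFiltered I] (X : I ⥤ C) : Ind C :=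
  colimit (X ⋙ Ind.yoneda)

/-- The morphism of ind-objects induced by a natural transformation of diagrams. -/
noncomputable def indMap {I : Type v} [SmallCategory I] [IsFiltered I] {X Y : I ⥤ C}
    (φ : X ⟶ Y) : indOf X ⟶ indOf Y :=
  colim.map (Functor.whiskerRight φ Ind.yoneda)

/-- `Lw M` is the class of morphisms of `Ind C` that are isomorphic, in the arrow category of
`Ind C`, to a morphism induced by a natural transformation of small filtered diagrams which is
levelwise in `M` (the essentially levelwise `M`-maps). -/
def Lw (M : MorphismProperty C) : MorphismProperty (Ind C) := fun _ _ f =>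
  ∃ (I : Type v) (_ : SmallCategory I) (_ : IsFiltered I) (X Y : I ⥤ C) (φ : X ⟶ Y),
    (∀ i : I, M (φ.app i)) ∧ Nonempty (Arrow.mk f ≅ Arrow.mk (indMap φ))


/-- `f` is a retract of `g` in the arrow category. -/
def IsRetractOf {M : Type u} [Category.{v} M] {A B X Y : M} (f : A ⟶ B) (g : X ⟶ Y) : Prop :=
  ∃ (i : A ⟶ X) (r : X ⟶ A) (i' : B ⟶ Y) (r' : Y ⟶ B),
    i ≫ r = 𝟙 A ∧ i' ≫ r' = 𝟙 B ∧ i ≫ g = f ≫ i' ∧ r ≫ f = g ≫ r'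

/-- The closure of a class of morphisms under retracts. -/
def retracts {M : Type u} [Category.{v} M] (P : MorphismProperty M) : MorphismProperty M :=
  fun _ _ f => ∃ (X Y : M) (g : X ⟶ Y), P g ∧ IsRetractOf f g

/-! A retract `f` of `indMap φ` is the image of the idempotent `e = r ≫ i` of the arrow
`indMap φ`, i.e. the colimit of `indMap φ ⟶ indMap φ ⟶ ⋯` with all transition maps `e`. Objects
of `C` are finitely presentable in `Ind C`, so every power of `e` is represented stage by stage by
maps of the diagrams `X` and `Y` commuting with `φ`. Gluing the copies of the index category
along these maps gives a single filtered category, the `Telescope`, and `f` is the colimit over it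
of the maps `φ.app i`; idempotence of `e` is what identifies this colimit with the image of `e`. -/

-- Lets `rw` and `simp` see `indOf F` as the colimit `colimit (F ⋙ Ind.yoneda)`.
attribute [reducible] indOf

open Opposite

-- Maps out of `Ind.yoneda.obj A` are maps out of the representable `yoneda.obj A`, and filtered
-- colimits in `Ind C` are computed in presheaves.
instance isFinitelyPresentable_indYoneda_obj (A : C) :
    IsFinitelyPresentable.{v} (Ind.yoneda.obj A) := by
  rw [isFinitelyPresentable_iff_preservesFilteredColimits]
  let iso : Ind.inclusion C ⋙ coyoneda.obj (op (yoneda.obj A)) ≅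
      coyoneda.obj (op (Ind.yoneda.obj A)) :=
    NatIso.ofComponents
      (fun Z => (((Ind.yonedaCompInclusion.app A).homCongr (Iso.refl _)).symm.trans
        (Functor.FullyFaithful.ofFullyFaithful (Ind.inclusion C)).homEquiv.symm).toIso)
      (by intros; ext; apply (Ind.inclusion C).map_injective; simp)
  refine ⟨fun J _ _ => ?_⟩
  have : PreservesColimitsOfShape J (coyoneda.obj (op (yoneda.obj A))) := ⟨inferInstance⟩
  exact preservesColimitsOfShape_of_natIso iso

lemma _root_.CategoryTheory.End.pow_sub_comp_pow_sub {D : Type*} [Category D] {Z : D}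
    (e : End Z) {a b c : ℕ} (hab : a ≤ b) (hbc : b ≤ c) :
    (e ^ (b - a)) ≫ (e ^ (c - b)) = e ^ (c - a) := by
  rw [← End.mul_def, ← pow_add]
  congr 1
  omega

abbrev _root_.CategoryTheory.Retract.idempotent {D : Type*} [Category D] {A Z : D}
    (R : Retract A Z) : End Z :=
  R.r ≫ R.i

lemma _root_.CategoryTheory.Retract.isIdempotentElem_idempotent {D : Type*} [Category D]
    {A Z : D} (R : Retract A Z) : IsIdempotentElem R.idempotent := by
  simp [IsIdempotentElem, End.mul_def]

lemma _root_.CategoryTheory.Retract.idempotent_pow_comp_r {D : Type*} [Category D]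
    {A Z : D} (R : Retract A Z) (k : ℕ) : (R.idempotent ^ k) ≫ R.r = R.r := by
  cases k with
  | zero => simp [End.one_def]
  | succ k => rw [R.isIdempotentElem_idempotent.pow_succ_eq]; simp

section Filtered

variable {I : Type v} [SmallCategory I] [IsFiltered I]

section Diagram

variable (F : I ⥤ C)

lemma exists_yoneda_map_comp_ι {A : C} (t : Ind.yoneda.obj A ⟶ indOf F) :
    ∃ (j : I) (p : A ⟶ F.obj j), Ind.yoneda.map p ≫ colimit.ι (F ⋙ Ind.yoneda) j = t := by
  obtain ⟨j, p, hp⟩ := IsFinitelyPresentable.exists_hom_of_isColimit (colimit.isColimit _) t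
  obtain ⟨p, rfl⟩ := Ind.yoneda.map_surjective p
  exact ⟨j, p, hp⟩

lemma exists_comp_map_eq_of_yoneda_map_comp_ι_eq {A : C} {j : I} {p q : A ⟶ F.obj j}
    (h : Ind.yoneda.map p ≫ colimit.ι (F ⋙ Ind.yoneda) j =
      Ind.yoneda.map q ≫ colimit.ι (F ⋙ Ind.yoneda) j) :
    ∃ (k : I) (c : j ⟶ k), p ≫ F.map c = q ≫ F.map c := by
  obtain ⟨k, a, b, hab⟩ :=
    IsFinitelyPresentable.exists_eq_of_isColimit (colimit.isColimit (F ⋙ Ind.yoneda))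
      (i := j) (j := j) (Ind.yoneda.map p) (Ind.yoneda.map q) h
  replace hab : p ≫ F.map a = q ≫ F.map b := Ind.yoneda.map_injective (by simpa using hab)
  refine ⟨_, a ≫ IsFiltered.coeqHom a b, ?_⟩
  rw [F.map_comp, reassoc_of% hab, ← F.map_comp, ← F.map_comp, IsFiltered.coeq_condition]

def Represents {i j : I} (u : F.obj i ⟶ F.obj j) (g : indOf F ⟶ indOf F) : Prop :=
  Ind.yoneda.map u ≫ colimit.ι (F ⋙ Ind.yoneda) j = colimit.ι (F ⋙ Ind.yoneda) i ≫ g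

variable {F}

lemma Represents.yoneda_map_comp_ι {i j : I} {u : F.obj i ⟶ F.obj j} {g : indOf F ⟶ indOf F}
    (h : Represents F u g) :
    Ind.yoneda.map u ≫ colimit.ι (F ⋙ Ind.yoneda) j = colimit.ι (F ⋙ Ind.yoneda) i ≫ g :=
  h

lemma represents_id (i : I) : Represents F (𝟙 (F.obj i)) (𝟙 _) := by
  simp [Represents]

lemma represents_map {i j : I} (c : i ⟶ j) : Represents F (F.map c) (𝟙 _) := by
  simpa [Represents] using colimit.w (F ⋙ Ind.yoneda) c

lemma Represents.comp {i j k : I} {u : F.obj i ⟶ F.obj j} {u' : F.obj j ⟶ F.obj k}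
    {g g' : indOf F ⟶ indOf F} (h : Represents F u g) (h' : Represents F u' g') :
    Represents F (u ≫ u') (g ≫ g') := by
  rw [Represents, Functor.map_comp, Category.assoc, h', reassoc_of% h]

lemma Represents.comp_map {i j k : I} {u : F.obj i ⟶ F.obj j} {g : indOf F ⟶ indOf F}
    (h : Represents F u g) (c : j ⟶ k) : Represents F (u ≫ F.map c) g := by
  simpa using h.comp (represents_map c)

variable (F) in
lemma exists_represents (i : I) (g : indOf F ⟶ indOf F) :
    ∃ (j : I) (u : F.obj i ⟶ F.obj j), Represents F u g :=
  exists_yoneda_map_comp_ι F _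

lemma Represents.exists_comp_map_eq {i j : I} {u u' : F.obj i ⟶ F.obj j}
    {g : indOf F ⟶ indOf F} (h : Represents F u g) (h' : Represents F u' g) :
    ∃ (k : I) (c : j ⟶ k), u ≫ F.map c = u' ≫ F.map c :=
  exists_comp_map_eq_of_yoneda_map_comp_ι_eq F (h.trans h'.symm)

end Diagram

section Square

variable {X Y : I ⥤ C} (φ : X ⟶ Y)

@[simp]
lemma ι_indMap (i : I) :
    colimit.ι (X ⋙ Ind.yoneda) i ≫ indMap φ =
      Ind.yoneda.map (φ.app i) ≫ colimit.ι (Y ⋙ Ind.yoneda) i := by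
  simp [indMap]

lemma exists_represents_arrow (a : Arrow.mk (indMap φ) ⟶ Arrow.mk (indMap φ)) (i : I) :
    ∃ (j : I) (u : X.obj i ⟶ X.obj j) (v : Y.obj i ⟶ Y.obj j),
      Represents X u a.left ∧ Represents Y v a.right ∧ u ≫ φ.app j = φ.app i ≫ v := by
  obtain ⟨j₁, u, hu⟩ := exists_represents X i a.left
  obtain ⟨j₂, v, hv⟩ := exists_represents Y i a.right
  let j := IsFiltered.max j₁ j₂
  let c₁ := IsFiltered.leftToMax j₁ j₂
  let c₂ := IsFiltered.rightToMax j₁ j₂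
  replace hu := hu.comp_map c₁
  replace hv := hv.comp_map c₂
  have hsq : Ind.yoneda.map ((u ≫ X.map c₁) ≫ φ.app j) ≫ colimit.ι (Y ⋙ Ind.yoneda) j =
      Ind.yoneda.map (φ.app i ≫ v ≫ Y.map c₂) ≫ colimit.ι (Y ⋙ Ind.yoneda) j := by
    have ha := Arrow.w a
    simp only [Arrow.mk_hom] at ha
    rw [Functor.map_comp, Category.assoc, ← ι_indMap, reassoc_of% hu, ha, Functor.map_comp,
      Category.assoc, hv, reassoc_of% ι_indMap]
  obtain ⟨k, c, hc⟩ := exists_comp_map_eq_of_yoneda_map_comp_ι_eq Y hsq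
  refine ⟨k, (u ≫ X.map c₁) ≫ X.map c, (v ≫ Y.map c₂) ≫ Y.map c, hu.comp_map c, hv.comp_map c, ?_⟩
  rw [Category.assoc, φ.naturality, ← Category.assoc, hc, Category.assoc]

end Square

variable {X Y : I ⥤ C}

/-- The Grothendieck construction of the sequence `indMap φ → indMap φ → ⋯` whose transition
maps are all `e`: the object `⟨n, i⟩` is the stage `i` of the `n`-th copy of `φ`. -/
structure Telescope (φ : X ⟶ Y) (e : End (Arrow.mk (indMap φ))) : Type v where
  n : ℕ
  i : I

namespace Telescope

variable {φ : X ⟶ Y} {e : End (Arrow.mk (indMap φ))}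

@[ext]
structure Hom (ρ ρ' : Telescope φ e) : Type v where
  left : X.obj ρ.i ⟶ X.obj ρ'.i
  right : Y.obj ρ.i ⟶ Y.obj ρ'.i
  le : ρ.n ≤ ρ'.n
  represents_left : Represents X left (e ^ (ρ'.n - ρ.n)).left
  represents_right : Represents Y right (e ^ (ρ'.n - ρ.n)).right
  w : left ≫ φ.app ρ'.i = φ.app ρ.i ≫ right

instance : SmallCategory (Telescope φ e) where
  Hom := Hom
  id ρ := ⟨𝟙 _, 𝟙 _, le_rfl, by simpa [End.one_def] using represents_id ρ.i,
    by simpa [End.one_def] using represents_id ρ.i, by simp⟩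
  comp a b := ⟨a.left ≫ b.left, a.right ≫ b.right, a.le.trans b.le,
    by simpa only [← End.pow_sub_comp_pow_sub e a.le b.le, Arrow.comp_left] using
      a.represents_left.comp b.represents_left,
    by simpa only [← End.pow_sub_comp_pow_sub e a.le b.le, Arrow.comp_right] using
      a.represents_right.comp b.represents_right,
    by rw [Category.assoc, b.w, reassoc_of% a.w]⟩
  id_comp _ := Hom.ext (Category.id_comp _) (Category.id_comp _)
  comp_id _ := Hom.ext (Category.comp_id _) (Category.comp_id _)
  assoc _ _ _ := Hom.ext (Category.assoc _ _ _) (Category.assoc _ _ _)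

variable (φ e)

abbrev left : Telescope φ e ⥤ C where
  obj ρ := X.obj ρ.i
  map m := Hom.left m

abbrev right : Telescope φ e ⥤ C where
  obj ρ := Y.obj ρ.i
  map m := Hom.right m

abbrev arrow : left φ e ⟶ right φ e where
  app ρ := φ.app ρ.i
  naturality _ _ m := Hom.w m

def incl (n : ℕ) : I ⥤ Telescope φ e where
  obj i := ⟨n, i⟩
  map c := ⟨X.map c, Y.map c, le_rfl, by simpa [End.one_def] using represents_map c,
    by simpa [End.one_def] using represents_map c, φ.naturality c⟩
  map_id _ := Hom.ext (X.map_id _) (Y.map_id _)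
  map_comp _ _ := Hom.ext (X.map_comp _ _) (Y.map_comp _ _)

variable {φ e}

lemma exists_hom (ρ : Telescope φ e) {N : ℕ} (h : ρ.n ≤ N) :
    ∃ j : I, Nonempty (ρ ⟶ ⟨N, j⟩) := by
  obtain ⟨j, u, v, hu, hv, w⟩ := exists_represents_arrow φ (e ^ (N - ρ.n)) ρ.i
  exact ⟨j, ⟨⟨u, v, h, hu, hv, w⟩⟩⟩

instance : IsFiltered (Telescope φ e) where
  nonempty := ⟨⟨0, IsFiltered.nonempty.some⟩⟩
  cocone_objs ρ ρ' := by
    obtain ⟨j, ⟨a⟩⟩ := exists_hom ρ (le_max_left ρ.n ρ'.n)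
    obtain ⟨j', ⟨b⟩⟩ := exists_hom ρ' (le_max_right ρ.n ρ'.n)
    exact ⟨_, a ≫ (incl φ e _).map (IsFiltered.leftToMax j j'),
      b ≫ (incl φ e _).map (IsFiltered.rightToMax j j'), trivial⟩
  cocone_maps ρ ρ' a b := by
    obtain ⟨k₁, c₁, h₁⟩ := a.represents_left.exists_comp_map_eq b.represents_left
    obtain ⟨k₂, c₂, h₂⟩ := a.represents_right.exists_comp_map_eq b.represents_right
    obtain ⟨k, d₁, d₂, hd⟩ := IsFiltered.span c₁ c₂
    refine ⟨_, (incl φ e ρ'.n).map (c₁ ≫ d₁), Hom.ext ?_ ?_⟩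
    · change a.left ≫ X.map (c₁ ≫ d₁) = b.left ≫ X.map (c₁ ≫ d₁)
      rw [X.map_comp, reassoc_of% h₁]
    · change a.right ≫ Y.map (c₁ ≫ d₁) = b.right ≫ Y.map (c₁ ≫ d₁)
      rw [hd, Y.map_comp, reassoc_of% h₂]

section Incl

variable (φ e)

noncomputable def inclLeft : indOf X ⟶ indOf (left φ e) :=
  colimit.pre (left φ e ⋙ Ind.yoneda) (incl φ e 0)

noncomputable def inclRight : indOf Y ⟶ indOf (right φ e) :=
  colimit.pre (right φ e ⋙ Ind.yoneda) (incl φ e 0)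

@[simp]
lemma ι_inclLeft (i : I) :
    colimit.ι (X ⋙ Ind.yoneda) i ≫ inclLeft φ e = colimit.ι (left φ e ⋙ Ind.yoneda) ⟨0, i⟩ :=
  colimit.ι_pre (left φ e ⋙ Ind.yoneda) (incl φ e 0) i

@[simp]
lemma ι_inclRight (i : I) :
    colimit.ι (Y ⋙ Ind.yoneda) i ≫ inclRight φ e = colimit.ι (right φ e ⋙ Ind.yoneda) ⟨0, i⟩ :=
  colimit.ι_pre (right φ e ⋙ Ind.yoneda) (incl φ e 0) i

end Incl

/-- For idempotent `e`, a map of diagrams represents `e` between any two levels `n < n'`, so the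
composite of `m` and `m'` below is again a morphism, now out of `ρ`. -/
lemma exists_reroute_through_level_zero (he : IsIdempotentElem e) (ρ : Telescope φ e) :
    ∃ (j j' : I) (m : ρ ⟶ ⟨ρ.n + 1, j⟩) (m' : (⟨0, j⟩ : Telescope φ e) ⟶ ⟨ρ.n + 1, j'⟩)
      (m'' : ρ ⟶ ⟨ρ.n + 1, j'⟩), m''.left = m.left ≫ m'.left ∧ m''.right = m.right ≫ m'.right := by
  obtain ⟨j, ⟨m⟩⟩ := exists_hom ρ (N := ρ.n + 1) (Nat.le_succ _)
  obtain ⟨j', ⟨m'⟩⟩ := exists_hom (⟨0, j⟩ : Telescope φ e) (N := ρ.n + 1) (Nat.zero_le _)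
  have h₁ : e ^ (ρ.n + 1 - ρ.n) = e := he.pow_eq (by omega)
  have h₂ : e ^ (ρ.n + 1 - 0) = e := he.pow_eq (by omega)
  have hl : Represents X (m.left ≫ m'.left) (e ^ (ρ.n + 1 - ρ.n)).left := by
    have := m.represents_left.comp m'.represents_left
    simp only [h₁, h₂] at this ⊢
    rwa [← Arrow.comp_left, ← End.mul_def, he.eq] at this
  have hr : Represents Y (m.right ≫ m'.right) (e ^ (ρ.n + 1 - ρ.n)).right := by
    have := m.represents_right.comp m'.represents_right
    simp only [h₁, h₂] at this ⊢
    rwa [← Arrow.comp_right, ← End.mul_def, he.eq] at this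
  exact ⟨j, j', m, m', ⟨_, _, Nat.le_succ _, hl, hr, by rw [Category.assoc, m'.w, reassoc_of% m.w]⟩,
    rfl, rfl⟩

variable {W : Arrow (Ind C)} (R : Retract W (Arrow.mk (indMap φ)))

noncomputable def descLeft : indOf (left φ R.idempotent) ⟶ W.left :=
  colimit.desc _
    { pt := W.left
      ι :=
        { app ρ := colimit.ι (X ⋙ Ind.yoneda) ρ.i ≫ R.r.left
          naturality ρ ρ' m := by
            have hr := congrArg Arrow.Hom.left (R.idempotent_pow_comp_r (ρ'.n - ρ.n))
            simp only [Arrow.comp_left] at hr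
            simp [reassoc_of% m.represents_left.yoneda_map_comp_ι, hr] } }

noncomputable def descRight : indOf (right φ R.idempotent) ⟶ W.right :=
  colimit.desc _
    { pt := W.right
      ι :=
        { app ρ := colimit.ι (Y ⋙ Ind.yoneda) ρ.i ≫ R.r.right
          naturality ρ ρ' m := by
            have hr := congrArg Arrow.Hom.right (R.idempotent_pow_comp_r (ρ'.n - ρ.n))
            simp only [Arrow.comp_right] at hr
            simp [reassoc_of% m.represents_right.yoneda_map_comp_ι, hr] } }

@[simp]
lemma ι_descLeft (ρ : Telescope φ R.idempotent) :
    colimit.ι (left φ R.idempotent ⋙ Ind.yoneda) ρ ≫ descLeft R =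
      colimit.ι (X ⋙ Ind.yoneda) ρ.i ≫ R.r.left :=
  colimit.ι_desc _ _

@[simp]
lemma ι_descRight (ρ : Telescope φ R.idempotent) :
    colimit.ι (right φ R.idempotent ⋙ Ind.yoneda) ρ ≫ descRight R =
      colimit.ι (Y ⋙ Ind.yoneda) ρ.i ≫ R.r.right :=
  colimit.ι_desc _ _

lemma ι_comp_idempotent_left_comp_inclLeft (ρ : Telescope φ R.idempotent) :
    colimit.ι (X ⋙ Ind.yoneda) ρ.i ≫ R.idempotent.left ≫ inclLeft φ R.idempotent =
      colimit.ι (left φ R.idempotent ⋙ Ind.yoneda) ρ := by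
  obtain ⟨j, j', m, m', m'', hm'', -⟩ :=
    exists_reroute_through_level_zero R.isIdempotentElem_idempotent ρ
  have hm : Represents X m.left R.idempotent.left := by simpa using m.represents_left
  rw [← reassoc_of% hm.yoneda_map_comp_ι, ι_inclLeft, ← colimit.w _ m', ← colimit.w _ m'']
  simp [hm'']

lemma ι_comp_idempotent_right_comp_inclRight (ρ : Telescope φ R.idempotent) :
    colimit.ι (Y ⋙ Ind.yoneda) ρ.i ≫ R.idempotent.right ≫ inclRight φ R.idempotent =
      colimit.ι (right φ R.idempotent ⋙ Ind.yoneda) ρ := by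
  obtain ⟨j, j', m, m', m'', -, hm''⟩ :=
    exists_reroute_through_level_zero R.isIdempotentElem_idempotent ρ
  have hm : Represents Y m.right R.idempotent.right := by simpa using m.represents_right
  rw [← reassoc_of% hm.yoneda_map_comp_ι, ι_inclRight, ← colimit.w _ m', ← colimit.w _ m'']
  simp [hm'']

noncomputable def leftIso : indOf (left φ R.idempotent) ≅ W.left where
  hom := descLeft R
  inv := R.i.left ≫ inclLeft φ R.idempotent
  hom_inv_id := colimit.hom_ext fun ρ => by
    simpa [reassoc_of% ι_descLeft] using ι_comp_idempotent_left_comp_inclLeft R ρ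
  inv_hom_id := by
    have : inclLeft φ R.idempotent ≫ descLeft R = R.r.left :=
      colimit.hom_ext fun i => by simp [reassoc_of% ι_inclLeft]
    simp [this, ← Arrow.comp_left]

noncomputable def rightIso : indOf (right φ R.idempotent) ≅ W.right where
  hom := descRight R
  inv := R.i.right ≫ inclRight φ R.idempotent
  hom_inv_id := colimit.hom_ext fun ρ => by
    simpa [reassoc_of% ι_descRight] using ι_comp_idempotent_right_comp_inclRight R ρ
  inv_hom_id := by
    have : inclRight φ R.idempotent ≫ descRight R = R.r.right :=
      colimit.hom_ext fun i => by simp [reassoc_of% ι_inclRight]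
    simp [this, ← Arrow.comp_right]

noncomputable def arrowIso : Arrow.mk (indMap (arrow φ R.idempotent)) ≅ W :=
  Arrow.isoMk (leftIso R) (rightIso R) (colimit.hom_ext fun ρ => by
    simp [leftIso, rightIso, reassoc_of% ι_descLeft, reassoc_of% ι_indMap])

end Telescope

lemma lw_of_retract {X Y : I ⥤ C} {φ : X ⟶ Y} {M : MorphismProperty C}
    (hφ : ∀ i, M (φ.app i)) {W : Arrow (Ind C)} (R : Retract W (Arrow.mk (indMap φ))) :
    Lw M W.hom :=
  ⟨Telescope φ R.idempotent, inferInstance, inferInstance, _, _, Telescope.arrow φ _,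
    fun ρ => hφ ρ.i, ⟨(Telescope.arrowIso R).symm⟩⟩

end Filtered

lemma IsRetractOf.nonempty_retractArrow {D : Type u} [Category.{v} D] {A B A' B' : D}
    {f : A ⟶ B} {g : A' ⟶ B'} (h : IsRetractOf f g) : Nonempty (RetractArrow f g) := by
  obtain ⟨i, r, i', r', hi, hi', hw, hw'⟩ := h
  exact ⟨⟨Arrow.homMk i i' hw, Arrow.homMk r r' hw', by ext <;> simp [hi, hi']⟩⟩

/-- For any class `M` of morphisms of `C`, the class `Lw≅(M)` of essentially levelwise
`M`-morphisms of `Ind C` is closed under retracts: `R(Lw≅(M)) = Lw≅(M)`. -/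
theorem retracts_Lw_eq_Lw (M : MorphismProperty C) :
    retracts (Lw M) = Lw M := by
  ext A B f
  constructor
  · rintro ⟨_, _, g, ⟨I, _, _, X, Y, φ, hφ, ⟨η⟩⟩, hfg⟩
    obtain ⟨R⟩ := hfg.nonempty_retractArrow
    exact lw_of_retract hφ (R.trans (Retract.ofIso η))
  · exact fun hf => ⟨A, B, f, hf, 𝟙 A, 𝟙 A, 𝟙 B, 𝟙 B, by simp, by simp, by simp, by simp⟩

end Paper
end

section
/- Let C be a category with finite colimits and M ⊆ C a subcategory closed under cobase change (pushout) and containing all isomorphisms. Then every essentially cospecial M-map in Ind(C) is an essentially levelwise M-map: coSp≅(M) ⊆ Lw≅(M). -/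
open CategoryTheory Limits

universe v u

namespace Paper

variable {C : Type v} [SmallCategory C]

/-- The inclusion functor of the full subposet `{s // s < t}` of a poset `T`. -/
def ltIncl {T : Type v} [Preorder T] (t : T) : {s : T // s < t} ⥤ T :=
  (Subtype.mono_coe _).functor

/-- The restriction of a diagram `X : T ⥤ C` to the subposet `{s // s < t}`. -/
def ltRestrict {T : Type v} [Preorder T] (X : T ⥤ C) (t : T) : {s : T // s < t} ⥤ C :=
  ltIncl t ⋙ X

/-- The canonical cocone on the restriction of `X` to `{s // s < t}` with point `X.obj t`. -/
def underCocone {T : Type v} [Preorder T] (X : T ⥤ C) (t : T) : Cocone (ltRestrict X t) where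
  pt := X.obj t
  ι :=
    { app := fun s => X.map (homOfLE s.2.le)
      naturality := fun s s' f => by
        dsimp [ltRestrict, ltIncl]
        rw [Category.comp_id]
        exact (X.map_comp _ _).symm }

/-- A natural transformation `φ : X ⟶ Y` of diagrams indexed by a cofinite directed poset `T`
is a cospecial `M`-map if for every `t : T` the canonical map
`X_t ⊔_{colim_{s<t} X_s} colim_{s<t} Y_s ⟶ Y_t` lies in `M`.  This is expressed by means of
chosen colimit cocones and a pushout square. -/
def IsCospecial {T : Type v} [PartialOrder T] (M : MorphismProperty C) {X Y : T ⥤ C}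
    (φ : X ⟶ Y) : Prop :=
  ∀ t : T, ∃ (cX : Cocone (ltRestrict X t)) (hX : IsColimit cX)
    (cY : Cocone (ltRestrict Y t)) (hY : IsColimit cY)
    (P : C) (a : X.obj t ⟶ P) (b : cY.pt ⟶ P) (h : P ⟶ Y.obj t),
      IsPushout (hX.desc (underCocone X t))
        (hX.desc ((Cocone.precompose (Functor.whiskerLeft (ltIncl t) φ)).obj cY)) a b ∧
      a ≫ h = φ.app t ∧ b ≫ h = hY.desc (underCocone Y t) ∧ M h

/-- The class `coSp≅(M)`: morphisms of `Ind C` isomorphic in the arrow category to a morphism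
induced by a cospecial `M`-map of diagrams indexed by a cofinite directed poset. -/
def coSp (M : MorphismProperty C) : MorphismProperty (Ind C) := fun _ _ f =>
  ∃ (T : Type v) (_ : PartialOrder T) (_ : IsFiltered T)
    (_ : ∀ t : T, Finite {s : T // s ≤ t}) (X Y : T ⥤ C) (φ : X ⟶ Y),
      IsCospecial M φ ∧ Nonempty (Arrow.mk f ≅ Arrow.mk (indMap φ))

end Paper

/-!
Write `L_t X = colim_{s<t} X_s`. The component `φ_t` factors as
`X_t ⟶ X_t ⊔_{L_t X} L_t Y ⟶ Y_t`: the second map is in `M` by cospeciality and the first is a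
cobase change of `L_t φ`. So it suffices that the map induced by `φ` on colimits over any finite
lower set `A` lies in `M`. This goes by induction on `|A|`: for `t` maximal in `A`,
`colim_A X = X_t ⊔_{L_t X} colim_{A \ {t}} X`, and likewise for `Y`; the induced map between
these pushouts lies in `M` because the map over `A \ {t}` and the relative map
`X_t ⊔_{L_t X} L_t Y ⟶ Y_t` do.
-/

namespace CategoryTheory.MorphismProperty

variable {C : Type*} [Category C] (M : MorphismProperty C)
  [M.IsStableUnderCobaseChange] [M.IsStableUnderComposition]

/-- `g` is the map of pushouts induced by a map of spans `(B ← L → A) ⟶ (B' ← L' → A')` whose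
component `B ⟶ B'` is `a ≫ h`, where `P = B ⊔_L L'`. It factors through `Z ⊔_A A' = P ⊔_{L'} A'`
as a cobase change of `α` followed by a cobase change of `h`. -/
lemma mem_map_of_isPushout [HasPushouts C] {L B A L' B' A' Z Z' P : C}
    {d : L ⟶ B} {j : L ⟶ A} {i : B ⟶ Z} {r : A ⟶ Z} (sq : IsPushout d j i r)
    {d' : L' ⟶ B'} {j' : L' ⟶ A'} {i' : B' ⟶ Z'} {r' : A' ⟶ Z'} (sq' : IsPushout d' j' i' r')
    {ℓ : L ⟶ L'} {α : A ⟶ A'} (hj : j ≫ α = ℓ ≫ j')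
    {a : B ⟶ P} {b : L' ⟶ P} (hP : IsPushout d ℓ a b) {h : P ⟶ B'} (hb : b ≫ h = d')
    {g : Z ⟶ Z'} (hi : i ≫ g = a ≫ h ≫ i') (hr : r ≫ g = α ≫ r')
    (hα : M α) (hh : M h) : M g := by
  have sqQ := IsPushout.of_hasPushout α r
  obtain ⟨k, hk₁, hk₂⟩ : ∃ k, pushout.inl α r ≫ k = r' ∧ pushout.inr α r ≫ k = g :=
    ⟨sqQ.desc r' g hr.symm, sqQ.inl_desc _ _ _, sqQ.inr_desc _ _ _⟩
  have hZQ : IsPushout d (ℓ ≫ j') (i ≫ pushout.inr α r) (pushout.inl α r) := by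
    simpa only [hj] using sq.paste_vert sqQ.flip
  obtain ⟨w, hw₁, hw₂⟩ :
      ∃ w, a ≫ w = i ≫ pushout.inr α r ∧ b ≫ w = j' ≫ pushout.inl α r :=
    ⟨hP.desc _ _ (by simpa only [Category.assoc] using hZQ.w), hP.inl_desc _ _ _,
      hP.inr_desc _ _ _⟩
  have hPQ : IsPushout b j' w (pushout.inl α r) :=
    IsPushout.of_top (by rwa [← hw₁] at hZQ) hw₂ hP
  have hk : IsPushout h w i' k := by
    refine IsPushout.of_left (by rwa [hb, hk₁]) (hP.hom_ext ?_ ?_) hPQ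
    · rw [reassoc_of% hw₁, hk₂, hi]
    · rw [reassoc_of% hw₂, hk₁, reassoc_of% hb, sq'.w]
  rw [← hk₂]
  exact M.comp_mem _ _ (M.of_isPushout sqQ.flip hα) (M.of_isPushout hk.flip hh)

end CategoryTheory.MorphismProperty

namespace CategoryTheory.Limits.IsColimit

lemma isIso_map {J D : Type*} [Category J] [Category D] {F G : J ⥤ D} {c : Cocone F}
    (hc : IsColimit c) {d : Cocone G} (hd : IsColimit d) (α : F ⟶ G) [IsIso α] :
    IsIso (hc.map d α) :=
  (hc.coconePointsIsoOfNatIso hd (asIso α)).isIso_hom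

end CategoryTheory.Limits.IsColimit

namespace Paper

variable {C : Type v} [SmallCategory C] {T : Type v} [PartialOrder T]

abbrev subsetIncl (A : Set T) : A ⥤ T := (Subtype.mono_coe (· ∈ A)).functor

abbrev subsetRestrict (X : T ⥤ C) (A : Set T) : A ⥤ C := subsetIncl A ⋙ X

def Cocone.restrict {X : T ⥤ C} {p : T → Prop} {B : Set T} (h : ∀ ⦃s⦄, p s → s ∈ B)
    (c : Cocone (subsetRestrict X B)) : Cocone ((Subtype.mono_coe p).functor ⋙ X) :=
  c.whisker (Monotone.functor (f := fun s : {s // p s} ↦ (⟨s, h s.2⟩ : B)) fun _ _ ↦ id)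

lemma mem_diff_singleton_of_lt {A : Set T} (hA : IsLowerSet A) {s t : T} (ht : t ∈ A)
    (hs : s < t) : s ∈ A \ {t} :=
  ⟨hA hs.le ht, hs.ne⟩

section Glue

variable {X : T ⥤ C} {A : Set T} (hA : IsLowerSet A) {t : T} (ht : Maximal (· ∈ A) t)
  (c : Cocone (subsetRestrict X (A \ {t}))) {W : C} (u : X.obj t ⟶ W) (v : c.pt ⟶ W)
  (huv : ∀ s (hs : s < t), X.map (homOfLE hs.le) ≫ u =
    c.ι.app ⟨s, mem_diff_singleton_of_lt hA ht.prop hs⟩ ≫ v)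

open Classical in
noncomputable def Cocone.glue : Cocone (subsetRestrict X A) where
  pt := W
  ι.app s := if hs : s.1 = t then X.map (homOfLE hs.le) ≫ u else c.ι.app ⟨s, s.2, hs⟩ ≫ v
  ι.naturality := by
    rintro ⟨p, hp⟩ ⟨q, hq⟩ ⟨⟨hpq : p ≤ q⟩⟩
    show X.map (homOfLE hpq) ≫
        (if hs : q = t then X.map (homOfLE hs.le) ≫ u else c.ι.app ⟨q, hq, hs⟩ ≫ v) =
      (if hs : p = t then X.map (homOfLE hs.le) ≫ u else c.ι.app ⟨p, hp, hs⟩ ≫ v) ≫ 𝟙 W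
    rw [Category.comp_id]
    by_cases hqt : q = t
    · rw [dif_pos hqt, ← X.map_comp_assoc]
      by_cases hpt : p = t
      · rw [dif_pos hpt]
        rfl
      · rw [dif_neg hpt]
        exact huv p (lt_of_le_of_ne (hqt ▸ hpq) hpt)
    · have hpt : p ≠ t := by
        rintro rfl
        exact hqt (ht.eq_of_ge hq hpq)
      rw [dif_neg hqt, dif_neg hpt,
        ← c.w (homOfLE hpq : (⟨p, hp, hpt⟩ : ↥(A \ {t})) ⟶ ⟨q, hq, hqt⟩)]
      exact (Category.assoc _ _ _).symm

lemma Cocone.glue_ι_app_self : (Cocone.glue hA ht c u v huv).ι.app ⟨t, ht.prop⟩ = u := by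
  simp [Cocone.glue, homOfLE_refl]

lemma Cocone.glue_ι_app_of_ne (s : ↥(A \ {t})) :
    (Cocone.glue hA ht c u v huv).ι.app ⟨s, s.2.1⟩ = c.ι.app s ≫ v :=
  dif_neg s.2.2

end Glue

lemma isPushout_colimit_of_maximal (X : T ⥤ C) {A : Set T} (hA : IsLowerSet A) {t : T}
    (ht : Maximal (· ∈ A) t) {cL : Cocone (ltRestrict X t)} (hL : IsColimit cL)
    {c' : Cocone (subsetRestrict X (A \ {t}))} (h' : IsColimit c')
    {c : Cocone (subsetRestrict X A)} (hc : IsColimit c) :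
    IsPushout (hL.desc (underCocone X t))
      (hL.desc (Cocone.restrict (fun _ ↦ mem_diff_singleton_of_lt hA ht.prop) c'))
      (c.ι.app ⟨t, ht.prop⟩) (h'.desc (Cocone.restrict Set.sdiff_subset c)) := by
  have w : hL.desc (underCocone X t) ≫ c.ι.app ⟨t, ht.prop⟩ =
      hL.desc (Cocone.restrict (fun _ ↦ mem_diff_singleton_of_lt hA ht.prop) c') ≫
        h'.desc (Cocone.restrict Set.sdiff_subset c) := by
    refine hL.hom_ext fun s ↦ ?_
    erw [hL.fac_assoc, hL.fac_assoc, h'.fac]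
    exact c.w (homOfLE s.2.le : (⟨s, hA s.2.le ht.prop⟩ : A) ⟶ ⟨t, ht.prop⟩)
  refine .of_isColimit' ⟨w⟩ (PushoutCocone.IsColimit.mk _ (fun s ↦ hc.desc
    (Cocone.glue hA ht c' s.inl s.inr fun p hp ↦ ?_)) (fun s ↦ ?_) (fun s ↦ ?_) fun s m h₁ h₂ ↦ ?_)
  · have := cL.ι.app ⟨p, hp⟩ ≫= s.condition
    erw [hL.fac_assoc, hL.fac_assoc] at this
    exact this
  · erw [hc.fac]
    exact Cocone.glue_ι_app_self ..
  · refine h'.hom_ext fun p ↦ ?_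
    erw [h'.fac_assoc, hc.fac]
    exact Cocone.glue_ι_app_of_ne ..
  · refine hc.hom_ext fun p ↦ ?_
    erw [hc.fac]
    obtain ⟨p, hpA⟩ := p
    by_cases hp : p = t
    · subst hp
      exact h₁.trans (Cocone.glue_ι_app_self ..).symm
    · refine Eq.trans ?_ (Cocone.glue_ι_app_of_ne hA ht c' _ _ _ ⟨p, hpA, hp⟩).symm
      rw [← h₂]
      erw [h'.fac_assoc]
      rfl

lemma colimMap_mem_of_maximal (M : MorphismProperty C) [HasPushouts C]
    [M.IsStableUnderCobaseChange] [M.IsStableUnderComposition] {X Y : T ⥤ C} {φ : X ⟶ Y}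
    (hφ : IsCospecial M φ) {A : Set T} (hA : IsLowerSet A) {t : T} (ht : Maximal (· ∈ A) t)
    {cX' : Cocone (subsetRestrict X (A \ {t}))} (hX' : IsColimit cX')
    {cY' : Cocone (subsetRestrict Y (A \ {t}))} (hY' : IsColimit cY')
    (h' : M (hX'.map cY' (Functor.whiskerLeft (subsetIncl _) φ)))
    {cX : Cocone (subsetRestrict X A)} (hX : IsColimit cX)
    {cY : Cocone (subsetRestrict Y A)} (hY : IsColimit cY) :
    M (hX.map cY (Functor.whiskerLeft (subsetIncl A) φ)) := by
  obtain ⟨cL, hL, cLY, hLY, P, a, b, h, hP, ha, hb, hh⟩ := hφ t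
  refine M.mem_map_of_isPushout (isPushout_colimit_of_maximal X hA ht hL hX' hX)
    (isPushout_colimit_of_maximal Y hA ht hLY hY' hY) (hL.hom_ext fun s ↦ ?_) hP hb ?_
    (hX'.hom_ext fun s ↦ ?_) h' hh
  · erw [hL.fac_assoc, hX'.ι_map, hL.ι_map_assoc, hLY.fac]
    rfl
  · erw [hX.ι_map, reassoc_of% ha]
    rfl
  · erw [hX'.fac_assoc, hX.ι_map, hX'.ι_map_assoc, hY'.fac]
    rfl

lemma colimMap_mem_of_finite (M : MorphismProperty C) [HasFiniteColimits C]
    [M.IsMultiplicative] [M.IsStableUnderCobaseChange] {X Y : T ⥤ C} {φ : X ⟶ Y}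
    (hφ : IsCospecial M φ) {A : Set T} (hfin : A.Finite) (hA : IsLowerSet A)
    {cX : Cocone (subsetRestrict X A)} (hX : IsColimit cX)
    {cY : Cocone (subsetRestrict Y A)} (hY : IsColimit cY) :
    M (hX.map cY (Functor.whiskerLeft (subsetIncl A) φ)) := by
  induction hn : A.ncard generalizing A with
  | zero =>
    obtain rfl : A = ∅ := (Set.ncard_eq_zero hfin).1 hn
    have : ∀ s : (∅ : Set T), IsIso ((Functor.whiskerLeft (subsetIncl ∅) φ).app s) :=
      isEmptyElim
    have := NatIso.isIso_of_isIso_app (Functor.whiskerLeft (subsetIncl ∅) φ)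
    have := hX.isIso_map hY (Functor.whiskerLeft (subsetIncl ∅) φ)
    exact M.of_isIso _
  | succ n ih =>
    obtain ⟨t, ht⟩ := hfin.exists_maximal (Set.nonempty_of_ncard_ne_zero (by omega))
    have : Fintype ↥(A \ {t}) := (hfin.sdiff (t := {t})).fintype
    refine colimMap_mem_of_maximal M hφ hA ht (colimit.isColimit _) (colimit.isColimit _)
      (ih (hfin.sdiff (t := {t})) (hA.erase fun _ hb ↦ ht.eq_of_ge hb)
        (colimit.isColimit _) (colimit.isColimit _) ?_) hX hY
    rw [Set.ncard_sdiff_singleton_of_mem ht.prop, hn, Nat.add_sub_cancel]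

theorem coSp_le_Lw_general [HasFiniteColimits C] (M : MorphismProperty C)
    [M.IsMultiplicative] [M.IsStableUnderCobaseChange] :
    coSp M ≤ Lw M := by
  rintro _ _ _ ⟨T, _, _, hfin, X, Y, φ, hφ, e⟩
  refine ⟨T, inferInstance, inferInstance, X, Y, φ, fun t ↦ ?_, e⟩
  obtain ⟨cX, hX, cY, hY, P, a, b, h, hP, ha, -, hh⟩ := hφ t
  have hIio : (Set.Iio t).Finite :=
    (Set.finite_coe_iff.1 (hfin t)).subset Set.Iio_subset_Iic_self
  have hL : M (hX.map cY (Functor.whiskerLeft (ltIncl t) φ)) :=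
    colimMap_mem_of_finite M hφ hIio (isLowerSet_Iio t) hX hY
  rw [← ha]
  exact M.comp_mem _ _ (M.of_isPushout hP hL) hh

/-- Let `C` be a category with finite colimits and `M` a subcategory of `C` (a multiplicative
class of morphisms) closed under cobase change and containing all isomorphisms.  Then every
essentially cospecial `M`-map in `Ind C` is an essentially levelwise `M`-map:
`coSp≅(M) ⊆ Lw≅(M)`. -/
theorem coSp_le_Lw [HasFiniteColimits C] (M : MorphismProperty C)
    [M.IsMultiplicative] [M.IsStableUnderCobaseChange]
    (hiso : MorphismProperty.isomorphisms C ≤ M) :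
    coSp M ≤ Lw M :=
  coSp_le_Lw_general M

end Paper
end

section
/- For a category B with finite colimits, the functor category of presheaves on B that send finite colimits in B to finite limits in Set is equivalent to Ind(B), via the extension of the Yoneda embedding that commutes with filtered colimits. -/
open CategoryTheory Limits

universe v

namespace Paper

lemma isIndObject_eq_nonempty_preservesFiniteLimits (C : Type v) [SmallCategory C]
    [HasFiniteColimits C] :
    IsIndObject = fun P : Cᵒᵖ ⥤ Type v => Nonempty (PreservesFiniteLimits P) :=
  funext fun P => propext <| (isIndObject_iff_preservesFiniteLimits P).trans nonempty_prop.symm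

/-- For a small category `B` with finite colimits, the category of ind-objects of `B` is
equivalent to the full subcategory of presheaves on `B` which send finite colimits in `B` to
finite limits in `Set` (i.e. which preserve finite limits as functors `Bᵒᵖ ⥤ Type`), via the
extension of the Yoneda embedding along filtered colimits (which is the canonical inclusion
`Ind B ⥤ Bᵒᵖ ⥤ Type`). -/
theorem ind_equiv_finiteColimitPreservingPresheaves (B : Type v) [SmallCategory B]
    [HasFiniteColimits B] :
    (∀ X : Ind B, Nonempty (PreservesFiniteLimits ((Ind.inclusion B).obj X))) ∧
    ∃ e : Ind B ≌ ObjectProperty.FullSubcategory (fun P : Bᵒᵖ ⥤ Type v => Nonempty (PreservesFiniteLimits P)),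
      Nonempty (e.functor ⋙ ObjectProperty.ι _ ≅ Ind.inclusion B) := by
  refine ⟨fun X => ⟨(isIndObject_iff_preservesFiniteLimits _).1 X.isIndObject_inclusion_obj⟩, ?_⟩
  rw [← isIndObject_eq_nonempty_preservesFiniteLimits]
  -- `Ind.inclusion B` is defined as `(Ind.equivalence B).functor ⋙ ObjectProperty.ι _`.
  exact ⟨Ind.equivalence B, ⟨Iso.refl _⟩⟩

end Paper
end
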